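/- For every nonnegative integer n and complex numbers a, x (with a not a nonpositive half-integer), the quadratic transformation ₃F₂(-n, a+ix, a-ix; a, a+1/2; 1) = ₂F₁(-2n, a+ix; 2a; 2) holds, where both sides are terminating sums. -/

import Mathlib

/-!
Write `b = a + ix`, `c = a - ix`, so `b + c = 2a`, and let `L` be the linear functional on
polynomials with `L(X^l) = (b)_l (c)_{M-l}` for `l ≤ M`. The Vandermonde convolution for rising
factorials says `L(X^p (1 + X)^N) = (b)_p (c)_q (b + c + p + q)_N` whenever `p + q + N = M`.

Take `M = 2n`. By the duplication formula `(a)_k (a + 1/2)_k 4^k = (2a)_{2k}`, the `k`-th term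
of the `₃F₂` times `(2a)_{2n}` is `L` of `C(n,k) (-4X)^k (1 + X)^{2(n-k)}`, while the `j`-th
term of the `₂F₁` times `(2a)_{2n}` is `L` of `C(2n,j) (-2X)^j (1 + X)^{2n-j}`. By the binomial
theorem both sums are `L((1 - X)^{2n})`, as `(1 + X)^2 - 4X = (1 - X)^2 = ((1 + X) - 2X)^2`.
-/

open Finset Complex

/-- Pochhammer symbol `(a)_k = a(a+1)⋯(a+k-1)`. -/
noncomputable def poch (a : ℂ) (k : ℕ) : ℂ := ∏ j ∈ Finset.range k, (a + j)

/-- Terminating hypergeometric series `₃F₂(-n, A, B; C, D; z)`. -/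
noncomputable def F32 (n : ℕ) (A B C D z : ℂ) : ℂ :=
  ∑ k ∈ Finset.range (n + 1),
    poch (-(n : ℂ)) k * poch A k * poch B k / (poch C k * poch D k * (k.factorial : ℂ)) * z ^ k

/-- Terminating hypergeometric series `₂F₁(-m, A; C; z)`. -/
noncomputable def F21 (m : ℕ) (A C z : ℂ) : ℂ :=
  ∑ k ∈ Finset.range (m + 1),
    poch (-(m : ℂ)) k * poch A k / (poch C k * (k.factorial : ℂ)) * z ^ k

open Polynomial

@[simp]
lemma poch_zero (a : ℂ) : poch a 0 = 1 :=
  prod_range_zero _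

lemma poch_succ (a : ℂ) (k : ℕ) : poch a (k + 1) = poch a k * (a + k) :=
  prod_range_succ _ _

lemma poch_ne_zero {a : ℂ} {k : ℕ} (h : ∀ j < k, a + j ≠ 0) : poch a k ≠ 0 :=
  prod_ne_zero_iff.2 fun j hj => h j (mem_range.1 hj)

lemma poch_eq_eval (a : ℂ) (k : ℕ) : poch a k = (ascPochhammer ℂ k).eval a := by
  induction k with
  | zero => simp
  | succ k ih => rw [poch_succ, ih, ascPochhammer_succ_eval]

lemma poch_add (a : ℂ) (m k : ℕ) : poch a (m + k) = poch a m * poch (a + m) k := by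
  simp [poch_eq_eval, ← ascPochhammer_mul]

lemma poch_neg_natCast (n k : ℕ) :
    poch (-(n : ℂ)) k = (-1) ^ k * k.factorial * n.choose k := by
  rw [poch_eq_eval, ascPochhammer_eval_neg_eq_descPochhammer, descPochhammer_eval_eq_descFactorial,
    Nat.descFactorial_eq_factorial_mul_choose]
  push_cast
  ring

lemma poch_two_mul (a : ℂ) (k : ℕ) :
    poch (2 * a) (2 * k) = poch a k * poch (a + 1 / 2) k * 4 ^ k := by
  induction k with
  | zero => simp
  | succ k ih =>
    rw [Nat.mul_succ, poch_succ, poch_succ, ih, poch_succ, poch_succ]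
    push_cast
    ring

-- Mathlib's Chu–Vandermonde identity `Ring.descPochhammer_smeval_add` is about `descPochhammer ℤ`.
lemma poch_eq_neg_one_pow_mul_descPochhammer (z : ℂ) (k : ℕ) :
    poch z k = (-1) ^ k * (descPochhammer ℤ k).smeval (-z) := by
  rw [poch_eq_eval, ← neg_neg z, ascPochhammer_eval_neg_eq_descPochhammer, ← aeval_eq_smeval,
    aeval_def, ← eval_map, descPochhammer_map, neg_neg]

lemma poch_add_eq_sum (x y : ℂ) (N : ℕ) :
    poch (x + y) N = ∑ i ∈ range (N + 1), N.choose i * (poch x i * poch y (N - i)) := by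
  rw [poch_eq_neg_one_pow_mul_descPochhammer, neg_add,
    Ring.descPochhammer_smeval_add _ (Commute.all _ _),
    Nat.sum_antidiagonal_eq_sum_range_succ (fun i j => (N.choose i : ℂ) *
      ((descPochhammer ℤ i).smeval (-x) * (descPochhammer ℤ j).smeval (-y))), mul_sum]
  refine sum_congr rfl fun i hi => ?_
  rw [poch_eq_neg_one_pow_mul_descPochhammer, poch_eq_neg_one_pow_mul_descPochhammer,
    ← pow_mul_pow_sub _ (Nat.lt_succ_iff.mp (mem_range.mp hi))]
  ring

noncomputable def pochFunctional (b c : ℂ) (M : ℕ) : ℂ[X] →ₗ[ℂ] ℂ :=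
  ∑ l ∈ range (M + 1), (poch b l * poch c (M - l)) • lcoeff ℂ l

lemma pochFunctional_X_pow (b c : ℂ) {M l : ℕ} (hl : l ≤ M) :
    pochFunctional b c M (X ^ l) = poch b l * poch c (M - l) := by
  simp [pochFunctional, coeff_X_pow, hl]

lemma pochFunctional_X_pow_mul_X_add_one_pow (b c : ℂ) {M p q N : ℕ} (h : p + q + N = M) :
    pochFunctional b c M (X ^ p * (X + 1) ^ N) = poch b p * poch c q * poch (b + c + p + q) N := by
  rw [show b + c + p + q = (b + p) + (c + q) by ring, poch_add_eq_sum, add_pow, mul_sum, map_sum,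
    mul_sum]
  refine sum_congr rfl fun i hi => ?_
  have hi : i ≤ N := Nat.lt_succ_iff.mp (mem_range.mp hi)
  rw [one_pow, mul_one, ← mul_assoc, ← pow_add, ← C_eq_natCast, mul_comm, ← smul_eq_C_mul,
    map_smul, pochFunctional_X_pow _ _ (by omega), smul_eq_mul, poch_add,
    show M - (p + i) = q + (N - i) by omega, poch_add]
  ring

lemma one_sub_X_pow_eq_sum (M : ℕ) :
    (1 - X : ℂ[X]) ^ M =
      ∑ j ∈ range (M + 1), ((-2) ^ j * M.choose j : ℂ) • (X ^ j * (X + 1) ^ (M - j)) := by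
  rw [show (1 - X : ℂ[X]) = -2 * X + (X + 1) by ring, add_pow]
  refine sum_congr rfl fun j _ => ?_
  simp only [Algebra.smul_def, map_mul, map_pow, map_neg, map_ofNat, map_natCast, mul_pow]
  ring

lemma one_sub_X_pow_two_mul_eq_sum (n : ℕ) :
    (1 - X : ℂ[X]) ^ (2 * n) =
      ∑ k ∈ range (n + 1),
        ((-4) ^ k * n.choose k : ℂ) • (X ^ k * (X + 1) ^ (2 * (n - k))) := by
  rw [pow_mul, show (1 - X : ℂ[X]) ^ 2 = -4 * X + (X + 1) ^ 2 by ring, add_pow]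
  refine sum_congr rfl fun k _ => ?_
  simp only [Algebra.smul_def, map_mul, map_pow, map_neg, map_ofNat, map_natCast, mul_pow,
    ← pow_mul]
  ring

lemma F21_mul_poch (M : ℕ) (b c : ℂ) (h : poch (b + c) M ≠ 0) :
    F21 M b (b + c) 2 * poch (b + c) M = pochFunctional b c M ((1 - X) ^ M) := by
  rw [F21, sum_mul, one_sub_X_pow_eq_sum, map_sum]
  refine sum_congr rfl fun j hj => ?_
  have hj : j ≤ M := Nat.lt_succ_iff.mp (mem_range.mp hj)
  have hsplit : poch (b + c) M = poch (b + c) j * poch (b + c + j) (M - j) := by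
    rw [← poch_add, Nat.add_sub_cancel' hj]
  have hden : poch (b + c) j * j.factorial ≠ 0 :=
    mul_ne_zero (left_ne_zero_of_mul (hsplit ▸ h)) (Nat.cast_ne_zero.2 j.factorial_ne_zero)
  rw [map_smul, pochFunctional_X_pow_mul_X_add_one_pow b c (show j + 0 + (M - j) = M by omega),
    hsplit, poch_neg_natCast, poch_zero, Nat.cast_zero, add_zero, div_mul_eq_mul_div,
    div_mul_eq_mul_div, div_eq_iff hden, neg_pow (2 : ℂ)]
  ring

lemma F32_mul_poch (n : ℕ) (a b c : ℂ) (hbc : b + c = 2 * a)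
    (h : poch (2 * a) (2 * n) ≠ 0) :
    F32 n b c a (a + 1 / 2) 1 * poch (2 * a) (2 * n) =
      pochFunctional b c (2 * n) ((1 - X) ^ (2 * n)) := by
  rw [F32, sum_mul, one_sub_X_pow_two_mul_eq_sum, map_sum]
  refine sum_congr rfl fun k hk => ?_
  have hk : k ≤ n := Nat.lt_succ_iff.mp (mem_range.mp hk)
  have hsplit : poch (2 * a) (2 * n) =
      poch a k * poch (a + 1 / 2) k * 4 ^ k * poch (b + c + k + k) (2 * (n - k)) := by
    rw [hbc, ← poch_two_mul,
      show 2 * a + k + k = 2 * a + ((2 * k : ℕ) : ℂ) by push_cast; ring, ← poch_add, ← Nat.mul_add, Nat.add_sub_cancel' hk]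
  rw [map_smul,
    pochFunctional_X_pow_mul_X_add_one_pow b c (show k + k + 2 * (n - k) = 2 * n by omega),
    hsplit, poch_neg_natCast]
  have hden : poch a k * poch (a + 1 / 2) k * k.factorial ≠ 0 :=
    mul_ne_zero (left_ne_zero_of_mul (left_ne_zero_of_mul (hsplit ▸ h)))
      (Nat.cast_ne_zero.2 k.factorial_ne_zero)
  rw [div_mul_eq_mul_div, div_mul_eq_mul_div, div_eq_iff hden, neg_pow (4 : ℂ)]
  ring

/-- Quadratic transformation
`₃F₂(-n, a+ix, a-ix; a, a+1/2; 1) = ₂F₁(-2n, a+ix; 2a; 2)` for complex `a`, `x`,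
where `a` is not a nonpositive integer or nonpositive half-integer. -/
theorem F32_eq_F21_even (n : ℕ) (a x : ℂ) (ha : ∀ m : ℕ, 2 * a ≠ -(m : ℂ)) :
    F32 n (a + Complex.I * x) (a - Complex.I * x) a (a + 1 / 2) 1 =
      F21 (2 * n) (a + Complex.I * x) (2 * a) 2 := by
  have hpoch : poch (2 * a) (2 * n) ≠ 0 :=
    poch_ne_zero fun j _ h => ha j (eq_neg_of_add_eq_zero_left h)
  have hbc : (a + Complex.I * x) + (a - Complex.I * x) = 2 * a := by ring
  refine mul_right_cancel₀ hpoch ?_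
  rw [F32_mul_poch n a _ _ hbc hpoch, ← hbc, F21_mul_poch _ _ _ (hbc ▸ hpoch)]
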